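/- Let S = ℂ[α_0, α_1, α_2] be graded by ℤ × ℤ/3 with deg α_0 = (1,0), deg α_1 = (1,1), deg α_2 = (1,2) (Cox ring of the fake projective plane ℙ²/(ℤ/3)). The annihilator of F = x_0⁴ x_1 x_2 ∈ T_{(6,0)} under contraction is (α_0⁵, α_1², α_2²). Moreover, the subring ℂ[α_1³/α_0³, α_2³/α_0³, α_1α_2/α_0²] of the localization (S_{α_0})_0 is isomorphic to ℂ[u,v,w]/(w³ − uv), and its quotient by the images of α_1² and α_2² is isomorphic to ℂ[w]/(w²), a ℂ-vector space of dimension 2. -/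

import Mathlib

open MvPolynomial

set_option maxHeartbeats 1000000
set_option synthInstance.maxHeartbeats 1000000

noncomputable section

/-- Contraction action: on monomials, `x^a ∘ y^b = y^(b-a)` if `a ≤ b`, else `0`. -/
def contract {σ : Type*} (g F : MvPolynomial σ ℂ) : MvPolynomial σ ℂ :=
  ∑ a ∈ g.support, ∑ b ∈ F.support,
    if a ≤ b then monomial (b - a) (g.coeff a * F.coeff b) else 0

/-- The Cox ring `S = ℂ[α₀, α₁, α₂]` of the fake projective plane `ℙ²/(ℤ/3)`
(graded by `ℤ × ℤ/3` with `deg α₀ = (1,0)`, `deg α₁ = (1,1)`, `deg α₂ = (1,2)`). -/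
abbrev Sfpp : Type := MvPolynomial (Fin 3) ℂ

/-- The localization `S_{α₀}`. -/
abbrev Lfpp : Type := Localization.Away (X 0 : Sfpp)

/-- `1/α₀` in the localization. -/
def a0inv : Lfpp := IsLocalization.Away.invSelf (X 0 : Sfpp)

/-- `u = α₁³/α₀³`. -/
def uf : Lfpp := algebraMap Sfpp Lfpp (X 1 ^ 3) * a0inv ^ 3
/-- `v = α₂³/α₀³`. -/
def vf : Lfpp := algebraMap Sfpp Lfpp (X 2 ^ 3) * a0inv ^ 3
/-- `w = α₁α₂/α₀²`. -/
def wf : Lfpp := algebraMap Sfpp Lfpp (X 1 * X 2) * a0inv ^ 2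

/-- The chart subring `ℂ[α₁³/α₀³, α₂³/α₀³, α₁α₂/α₀²]` of `S_{α₀}`. -/
def Bfpp : Subalgebra ℂ Lfpp := Algebra.adjoin ℂ {uf, vf, wf}

instance : HasQuotient ↥Bfpp (Ideal ↥Bfpp) := Ideal.instHasQuotient

/-- The ideal `(u, v, w²)` of the chart ring, generated by the images of `α₁²`
and `α₂²`. -/
def Jfpp : Ideal Bfpp :=
  Ideal.span {⟨uf, Algebra.subset_adjoin (by simp)⟩,
    ⟨vf, Algebra.subset_adjoin (by simp)⟩,
    (⟨wf, Algebra.subset_adjoin (by simp)⟩ : Bfpp) ^ 2}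

instance instCRB : CommRing (↥Bfpp) := inferInstance
instance instCRQB : CommRing (↥Bfpp ⧸ Jfpp) := Ideal.Quotient.commRing Jfpp
instance instAlgQB : Algebra ℂ (↥Bfpp ⧸ Jfpp) := Ideal.Quotient.algebra ℂ

/-!
Contraction of `xᵃ` against `xᵇ` is nonzero exactly when `a ≤ b`, so `g` annihilates the
monomial `xᵇ` iff no monomial of `g` divides `xᵇ`, i.e. iff `g` lies in the monomial ideal
`(αᵢ^(bᵢ+1))`.

Setting `α₀ = 1` maps the chart ring into `ℂ[x, y]` by `u ↦ x³, v ↦ y³, w ↦ xy`. Modulo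
`w³ - uv` every polynomial is `∑_{k<3} gₖ(u, v) wᵏ`, whose image `∑ gₖ(x³, y³) (xy)ᵏ` has
its `k`-th summand supported on monomials with `x`-exponent `≡ k (mod 3)`; hence the kernel
is exactly `(w³ - uv)`. Finally `(u, v, w²)` contains `w³ - uv`, so the quotient of the
chart ring is `ℂ[u, v, w]/(u, v, w²) ≅ ℂ[w]/(w²)`.
-/

section Contraction

variable {σ : Type*}

theorem contract_monomial (g : MvPolynomial σ ℂ) (b : σ →₀ ℕ) {c : ℂ} (hc : c ≠ 0) :
    contract g (monomial b c) =
      ∑ a ∈ g.support, if a ≤ b then monomial (b - a) (g.coeff a * c) else 0 := by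
  classical
  simp only [contract, support_monomial, if_neg hc, Finset.sum_singleton, coeff_monomial,
    ↓reduceIte]

theorem contract_monomial_eq_zero_iff (g : MvPolynomial σ ℂ) (b : σ →₀ ℕ) {c : ℂ}
    (hc : c ≠ 0) : contract g (monomial b c) = 0 ↔ ∀ a ∈ g.support, ¬ a ≤ b := by
  classical
  rw [contract_monomial g b hc]
  refine ⟨fun h a ha hab => ?_, fun h => Finset.sum_eq_zero fun a ha => if_neg (h a ha)⟩
  -- `a ↦ b - a` is injective on `{a | a ≤ b}`, so the coefficient at `b - a` only sees `a`
  have hcoeff := congrArg (coeff (b - a)) h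
  rw [coeff_zero, coeff_sum, Finset.sum_eq_single a] at hcoeff
  · rw [if_pos hab, coeff_monomial, if_pos rfl] at hcoeff
    exact mem_support_iff.mp ha ((mul_eq_zero.mp hcoeff).resolve_right hc)
  · intro a' _ hne
    split_ifs with ha'
    · rw [coeff_monomial, if_neg]
      intro hsub
      exact hne (by rw [← tsub_tsub_cancel_of_le ha', hsub, tsub_tsub_cancel_of_le hab])
    · exact coeff_zero _
  · exact fun h' => absurd ha h'

theorem setOf_contract_monomial_eq_zero (b : σ →₀ ℕ) {c : ℂ} (hc : c ≠ 0) :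
    {g : MvPolynomial σ ℂ | contract g (monomial b c) = 0} =
      ↑(Ideal.span (Set.range fun i => (X i : MvPolynomial σ ℂ) ^ (b i + 1))) := by
  have hgen : (Set.range fun i => (X i : MvPolynomial σ ℂ) ^ (b i + 1)) =
      (fun s => monomial s 1) '' Set.range fun i => Finsupp.single i (b i + 1) := by
    rw [← Set.range_comp]
    simp [Function.comp_def, X_pow_eq_monomial]
  ext g
  rw [Set.mem_ofPred_eq, contract_monomial_eq_zero_iff g b hc, SetLike.mem_coe, hgen,
    mem_ideal_span_monomial_image]
  refine forall₂_congr fun a _ => ?_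
  simp only [Set.exists_range_iff, Finsupp.single_le_iff, Nat.add_one_le_iff]
  simp only [Finsupp.le_def, not_forall, not_le]

end Contraction

theorem setOf_contract_X_zero_pow_four_mul_X_one_mul_X_two :
    {g : Sfpp | contract g (X 0 ^ 4 * X 1 * X 2) = 0} =
      ↑(Ideal.span {(X 0 : Sfpp) ^ 5, X 1 ^ 2, X 2 ^ 2}) := by
  have hF : (X 0 ^ 4 * X 1 * X 2 : Sfpp) =
      monomial (Finsupp.single 0 4 + Finsupp.single 1 1 + Finsupp.single 2 1) 1 := by
    rw [X_pow_eq_monomial, X, X, monomial_mul, monomial_mul, one_mul, one_mul]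
  rw [hF, setOf_contract_monomial_eq_zero _ one_ne_zero]
  congr 2
  ext p
  simp [Fin.exists_fin_succ, eq_comm]

section AnSingularity

variable {K : Type*} [CommRing K]

theorem exists_sum_rename_mul_pow_sub_mem {n : ℕ} (hn : n ≠ 0) (p : MvPolynomial (Fin 3) K) :
    ∃ g : ℕ → MvPolynomial (Fin 2) K,
      p - ∑ k ∈ Finset.range n, rename Fin.castSucc (g k) * X 2 ^ k ∈
        Ideal.span {X 2 ^ n - X 0 * X 1} := by
  obtain ⟨m, rfl⟩ : ∃ m, n = m + 1 := ⟨n - 1, by omega⟩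
  set I : Ideal (MvPolynomial (Fin 3) K) := Ideal.span {X 2 ^ (m + 1) - X 0 * X 1}
  induction p using MvPolynomial.induction_on with
  | C a =>
    refine ⟨fun k => if k = 0 then C a else 0, ?_⟩
    simp [Finset.sum_range_succ']
  | add p q hp hq =>
    obtain ⟨g, hg⟩ := hp
    obtain ⟨g', hg'⟩ := hq
    refine ⟨g + g', ?_⟩
    convert add_mem hg hg' using 1
    simp only [Pi.add_apply, map_add, add_mul, Finset.sum_add_distrib]
    ring
  | mul_X p i hp =>
    obtain ⟨g, hg⟩ := hp
    induction i using Fin.lastCases with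
    | last =>
      -- multiplying by `w` shifts the coefficients, and `w ^ n ≡ u * v` wraps the top one around
      refine ⟨fun k => if k = 0 then X 0 * X 1 * g m else g (k - 1), ?_⟩
      show p * X 2 - _ ∈ I
      have hwrap : X 2 ^ (m + 1) - X 0 * X 1 ∈ I := Ideal.subset_span rfl
      convert add_mem (Ideal.mul_mem_right (X 2) I hg)
        (Ideal.mul_mem_left I (rename Fin.castSucc (g m)) hwrap) using 1
      rw [Finset.sum_range_succ', Finset.sum_range_succ (fun k => rename _ (g k) * X 2 ^ k)]
      simp only [Nat.add_eq_zero_iff, one_ne_zero, and_false, ↓reduceIte, add_tsub_cancel_right,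
        map_mul, rename_X, Fin.castSucc_zero, Fin.castSucc_one, pow_succ, sub_mul, add_mul,
        Finset.sum_mul, mul_assoc]
      ring
    | cast j =>
      refine ⟨fun k => X j * g k, ?_⟩
      convert Ideal.mul_mem_right (X (Fin.castSucc j)) I hg using 1
      simp only [map_mul, rename_X, sub_mul, Finset.sum_mul]
      congr 1
      exact Finset.sum_congr rfl fun k _ => by ring

theorem X_zero_mul_X_one_pow (k : ℕ) :
    (X 0 * X 1 : MvPolynomial (Fin 2) K) ^ k =
      monomial (k • (Finsupp.single 0 1 + Finsupp.single 1 1)) 1 := by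
  rw [X, X, monomial_mul, one_mul, monomial_pow, one_pow]

theorem eq_zero_of_sum_expand_mul_pow_eq_zero {n : ℕ} {g : ℕ → MvPolynomial (Fin 2) K}
    (h : ∑ j ∈ Finset.range n, expand n (g j) * (X 0 * X 1) ^ j = 0) {k : ℕ} (hk : k < n) :
    g k = 0 := by
  set d : Fin 2 →₀ ℕ := Finsupp.single 0 1 + Finsupp.single 1 1
  ext a
  have hcoeff := congrArg (coeff (n • a + k • d)) h
  simp only [coeff_sum, coeff_zero, X_zero_mul_X_one_pow, coeff_mul_monomial', mul_one] at hcoeff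
  rw [Finset.sum_eq_single k, if_pos le_add_self, add_tsub_cancel_right] at hcoeff
  · rwa [coeff_expand_smul n (by omega)] at hcoeff
  · intro j hj hjk
    split_ifs with hle
    · -- the exponent of `X 0` is `n * a 0 + k - j`, which is not a multiple of `n`
      refine coeff_expand_of_not_dvd _ (i := 0) fun hdvd => hjk ?_
      have hle0 : j ≤ n * a 0 + k := by simpa [d] using hle 0
      have hdvd' : (n : ℤ) ∣ (k : ℤ) - j := by
        have : (n : ℤ) ∣ n * a 0 + (k - j) := by
          rw [← add_sub_assoc]
          exact_mod_cast (show n ∣ n * a 0 + k - j by simpa [d] using hdvd)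
        exact (dvd_add_right (dvd_mul_right (n : ℤ) (a 0))).mp this
      have := Int.eq_zero_of_abs_lt_dvd hdvd' (by rw [abs_lt]; simp at hj; omega)
      omega
    · rfl
  · exact fun hk' => absurd (Finset.mem_range.mpr hk) hk'

theorem ker_aeval_pow_pow_mul {n : ℕ} (hn : n ≠ 0) :
    RingHom.ker (aeval ![X 0 ^ n, X 1 ^ n, X 0 * X 1] :
        MvPolynomial (Fin 3) K →ₐ[K] MvPolynomial (Fin 2) K) =
      Ideal.span {X 2 ^ n - X 0 * X 1} := by
  set χ : MvPolynomial (Fin 3) K →ₐ[K] MvPolynomial (Fin 2) K :=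
    aeval ![X 0 ^ n, X 1 ^ n, X 0 * X 1]
  have hspan : Ideal.span {X 2 ^ n - X 0 * X 1} ≤ RingHom.ker χ := by
    rw [Ideal.span_le, Set.singleton_subset_iff, SetLike.mem_coe, RingHom.mem_ker]
    simp [χ, mul_pow]
  refine le_antisymm (fun p hp => ?_) hspan
  obtain ⟨g, hg⟩ := exists_sum_rename_mul_pow_sub_mem hn p
  have hrename (q : MvPolynomial (Fin 2) K) : χ (rename Fin.castSucc q) = expand n q := by
    rw [aeval_rename]
    have hcomp : ![X 0 ^ n, X 1 ^ n, X 0 * X 1] ∘ Fin.castSucc =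
        fun i : Fin 2 => (X i : MvPolynomial (Fin 2) K) ^ n := by
      ext1 i; fin_cases i <;> rfl
    rw [hcomp]
    rfl
  have hsum : ∑ k ∈ Finset.range n, expand n (g k) * (X 0 * X 1) ^ k = 0 := by
    have := hspan hg
    rw [RingHom.mem_ker, map_sub, RingHom.mem_ker.mp hp, zero_sub, neg_eq_zero] at this
    have hw : χ (X 2) = X 0 * X 1 := by simp [χ]
    simpa only [map_sum, map_mul, map_pow, hrename, hw] using this
  have hzero : ∑ k ∈ Finset.range n, rename Fin.castSucc (g k) * X 2 ^ k = 0 :=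
    Finset.sum_eq_zero fun k hk => by
      rw [eq_zero_of_sum_expand_mul_pow_eq_zero hsum (Finset.mem_range.mp hk), map_zero, zero_mul]
  simpa [hzero] using hg

end AnSingularity

theorem wf_pow_three : wf ^ 3 = uf * vf := by
  simp only [uf, vf, wf, map_mul, map_pow]
  ring

theorem isUnit_aeval_one_of_mem_powers_X_zero (y : Submonoid.powers (X 0 : Sfpp)) :
    IsUnit (aeval ![1, X 0, X 1] (y : Sfpp) : MvPolynomial (Fin 2) ℂ) := by
  obtain ⟨_, k, rfl⟩ := y
  simp

def dehomogenize : Lfpp →ₐ[ℂ] MvPolynomial (Fin 2) ℂ :=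
  IsLocalization.liftAlgHom isUnit_aeval_one_of_mem_powers_X_zero

theorem dehomogenize_algebraMap (s : Sfpp) :
    dehomogenize (algebraMap Sfpp Lfpp s) = aeval ![1, X 0, X 1] s :=
  IsLocalization.lift_eq _ s

theorem dehomogenize_a0inv : dehomogenize a0inv = 1 := by
  have h := congrArg dehomogenize (IsLocalization.Away.mul_invSelf (X 0 : Sfpp))
  rwa [map_mul, map_one, dehomogenize_algebraMap, aeval_X, Matrix.cons_val_zero, one_mul] at h

theorem dehomogenize_comp_aeval :
    dehomogenize.comp (aeval ![uf, vf, wf]) = aeval ![X 0 ^ 3, X 1 ^ 3, X 0 * X 1] := by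
  ext i
  fin_cases i <;> simp [uf, vf, wf, dehomogenize_algebraMap, dehomogenize_a0inv]

theorem ker_aeval_uf_vf_wf :
    RingHom.ker (aeval ![uf, vf, wf]) =
      Ideal.span {(X 2 : MvPolynomial (Fin 3) ℂ) ^ 3 - X 0 * X 1} := by
  refine le_antisymm (fun p hp => ?_) ?_
  · rw [← ker_aeval_pow_pow_mul three_ne_zero, RingHom.mem_ker, ← dehomogenize_comp_aeval,
      AlgHom.comp_apply, RingHom.mem_ker.mp hp, map_zero]
  · rw [Ideal.span_le, Set.singleton_subset_iff, SetLike.mem_coe, RingHom.mem_ker]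
    simp [wf_pow_three]

theorem range_aeval_uf_vf_wf : (aeval ![uf, vf, wf]).range = Bfpp := by
  rw [Bfpp, ← Algebra.adjoin_range_eq_range_aeval]
  simp only [Matrix.range_cons, Matrix.range_empty, Set.union_empty, Set.singleton_union]

def chartEquiv :
    (MvPolynomial (Fin 3) ℂ ⧸ Ideal.span {(X 2 : MvPolynomial (Fin 3) ℂ) ^ 3 - X 0 * X 1})
      ≃ₐ[ℂ] Bfpp :=
  (Ideal.quotientEquivAlgOfEq ℂ ker_aeval_uf_vf_wf.symm).trans
    ((Ideal.quotientKerEquivRange _).trans (Subalgebra.equivOfEq _ _ range_aeval_uf_vf_wf))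

theorem coe_chartEquiv_mk_X (i : Fin 3) :
    (chartEquiv (Ideal.Quotient.mk _ (X i)) : Lfpp) = ![uf, vf, wf] i :=
  aeval_X _ i

section FatPoint

variable {K : Type*} [CommRing K] (m : ℕ)

def quotientSpanXXXPowAlgEquiv :
    (MvPolynomial (Fin 3) K ⧸ Ideal.span {(X 0 : MvPolynomial (Fin 3) K), X 1, X 2 ^ m}) ≃ₐ[K]
      (Polynomial K ⧸ Ideal.span {(Polynomial.X : Polynomial K) ^ m}) := by
  set J : Ideal (MvPolynomial (Fin 3) K) := Ideal.span {X 0, X 1, X 2 ^ m}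
  set J₁ : Ideal (Polynomial K) := Ideal.span {Polynomial.X ^ m}
  set F : MvPolynomial (Fin 3) K →ₐ[K] Polynomial K ⧸ J₁ :=
    aeval ![0, 0, Ideal.Quotient.mkₐ K J₁ Polynomial.X]
  set G : Polynomial K →ₐ[K] MvPolynomial (Fin 3) K ⧸ J :=
    Polynomial.aeval (Ideal.Quotient.mkₐ K J (X 2))
  have hF : J ≤ RingHom.ker F := by
    rw [Ideal.span_le]
    rintro _ (rfl | rfl | rfl)
    · simp [F]
    · simp [F]
    · rw [SetLike.mem_coe, RingHom.mem_ker, map_pow, aeval_X, Matrix.cons_val_two,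
        Matrix.tail_cons, Matrix.head_cons, ← map_pow, Ideal.Quotient.mkₐ_eq_mk,
        Ideal.Quotient.eq_zero_iff_mem]
      exact Ideal.mem_span_singleton_self _
  have hG : J₁ ≤ RingHom.ker G := by
    rw [Ideal.span_le, Set.singleton_subset_iff, SetLike.mem_coe, RingHom.mem_ker, map_pow,
      Polynomial.aeval_X, ← map_pow, Ideal.Quotient.mkₐ_eq_mk, Ideal.Quotient.eq_zero_iff_mem]
    exact Ideal.subset_span (by simp)
  refine AlgEquiv.ofAlgHom (Ideal.Quotient.liftₐ J F fun _ ha => RingHom.mem_ker.mp (hF ha))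
    (Ideal.Quotient.liftₐ J₁ G fun _ ha => RingHom.mem_ker.mp (hG ha)) ?_ ?_
  · refine Ideal.Quotient.algHom_ext _ (Polynomial.algHom_ext ?_)
    rw [AlgHom.comp_assoc, Ideal.Quotient.liftₐ_comp, AlgHom.comp_apply, Polynomial.aeval_X,
      ← AlgHom.comp_apply, Ideal.Quotient.liftₐ_comp]
    simp [F]
  · refine Ideal.Quotient.algHom_ext _ (MvPolynomial.algHom_ext fun i => ?_)
    rw [AlgHom.comp_assoc, Ideal.Quotient.liftₐ_comp, AlgHom.comp_apply, aeval_X]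
    fin_cases i
    · simpa using (Ideal.Quotient.eq_zero_iff_mem.mpr (Ideal.subset_span (by simp))).symm
    · simpa using (Ideal.Quotient.eq_zero_iff_mem.mpr (Ideal.subset_span (by simp))).symm
    · simp only [Fin.reduceFinMk, Matrix.cons_val_two, Matrix.tail_cons, Matrix.head_cons]
      rw [← AlgHom.comp_apply, Ideal.Quotient.liftₐ_comp]
      simp [G]

end FatPoint

theorem Jfpp_eq_map :
    Jfpp = ((Ideal.span {(X 0 : MvPolynomial (Fin 3) ℂ), X 1, X 2 ^ 2}).map
      (Ideal.Quotient.mk (Ideal.span {(X 2 : MvPolynomial (Fin 3) ℂ) ^ 3 - X 0 * X 1}))).map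
        (chartEquiv : _ →+* Bfpp) := by
  have hX (i : Fin 3) : ((chartEquiv : MvPolynomial (Fin 3) ℂ ⧸ Ideal.span
      {(X 2 : MvPolynomial (Fin 3) ℂ) ^ 3 - X 0 * X 1} →+* Bfpp) (Ideal.Quotient.mk _ (X i)) :
        Lfpp) = ![uf, vf, wf] i := by
    rw [RingHom.coe_coe, coe_chartEquiv_mk_X]
  rw [Ideal.map_map, Ideal.map_span, Jfpp]
  simp only [Set.image_insert_eq, Set.image_singleton, RingHom.comp_apply, map_pow]
  congr
  exacts [(hX 0).symm, (hX 1).symm, (hX 2).symm]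

theorem span_X_pow_three_sub_le_span :
    Ideal.span {(X 2 : MvPolynomial (Fin 3) ℂ) ^ 3 - X 0 * X 1} ≤
      Ideal.span {X 0, X 1, X 2 ^ 2} := by
  rw [Ideal.span_le, Set.singleton_subset_iff, SetLike.mem_coe,
    show (X 2 : MvPolynomial (Fin 3) ℂ) ^ 3 = X 2 * X 2 ^ 2 by ring]
  exact sub_mem (Ideal.mul_mem_left _ _ (Ideal.subset_span (by simp)))
    (Ideal.mul_mem_right _ _ (Ideal.subset_span (by simp)))

def chartQuotientEquiv :
    (↥Bfpp ⧸ Jfpp) ≃ₐ[ℂ]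
      (Polynomial ℂ ⧸ Ideal.span {(Polynomial.X : Polynomial ℂ) ^ 2}) :=
  (Ideal.quotientEquivAlg _ Jfpp chartEquiv Jfpp_eq_map).symm.trans <|
    (DoubleQuot.quotQuotEquivQuotSupₐ ℂ _ _).trans <|
      (Ideal.quotientEquivAlgOfEq ℂ (sup_eq_right.mpr span_X_pow_three_sub_le_span)).trans
        (quotientSpanXXXPowAlgEquiv 2)

theorem finrank_chartQuotient : Module.finrank ℂ (↥Bfpp ⧸ Jfpp) = 2 := by
  rw [chartQuotientEquiv.toLinearEquiv.finrank_eq, finrank_quotient_span_eq_natDegree,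
    Polynomial.natDegree_X_pow]

/-- For the fake projective plane: the annihilator of `F = x₀⁴x₁x₂` under contraction is
`(α₀⁵, α₁², α₂²)`; the chart subring `ℂ[α₁³/α₀³, α₂³/α₀³, α₁α₂/α₀²]` of `S_{α₀}` is
isomorphic to `ℂ[u,v,w]/(w³ − uv)` (with `u, v, w` mapping to the three generators); and
its quotient by the ideal generated by the images of `α₁²` and `α₂²` (the ideal
`(u, v, w²)`) is isomorphic to `ℂ[w]/(w²)`, a `ℂ`-vector space of dimension `2`. -/
theorem stmt18 :
    ({g : Sfpp | contract g (X 0 ^ 4 * X 1 * X 2) = 0} =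
      ↑(Ideal.span {(X 0 : Sfpp) ^ 5, X 1 ^ 2, X 2 ^ 2})) ∧
    (∃ e : (MvPolynomial (Fin 3) ℂ ⧸
        Ideal.span {(X 2 : MvPolynomial (Fin 3) ℂ) ^ 3 - X 0 * X 1}) ≃ₐ[ℂ] Bfpp,
      e (Ideal.Quotient.mk _ (X 0)) = ⟨uf, Algebra.subset_adjoin (by simp)⟩ ∧
      e (Ideal.Quotient.mk _ (X 1)) = ⟨vf, Algebra.subset_adjoin (by simp)⟩ ∧
      e (Ideal.Quotient.mk _ (X 2)) = ⟨wf, Algebra.subset_adjoin (by simp)⟩) ∧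
    Nonempty ((↥Bfpp ⧸ Jfpp) ≃ₐ[ℂ]
      (Polynomial ℂ ⧸ Ideal.span {(Polynomial.X : Polynomial ℂ) ^ 2})) ∧
    Module.finrank ℂ (↥Bfpp ⧸ Jfpp) = 2 :=
  ⟨setOf_contract_X_zero_pow_four_mul_X_one_mul_X_two,
    ⟨chartEquiv, Subtype.ext (coe_chartEquiv_mk_X 0), Subtype.ext (coe_chartEquiv_mk_X 1),
      Subtype.ext (coe_chartEquiv_mk_X 2)⟩,
    ⟨chartQuotientEquiv⟩, finrank_chartQuotient⟩

end
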